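/- arXiv:1305.0983 — 5 statements merged into one kernel-verified Lean document; each statement's English description precedes it below -/
import Mathlib

section
/- Let N ∈ ℕ, G > 0, V > 0, e_max ≥ 0, and 0 ≤ e_s ≤ e_max. For each j ∈ {1,…,N} let H_j, K_j ∈ ℝ, J_j ≥ 0, x_{j,max} > 0, ω_j > 0, μ > 0, and let C_j : ℝ → ℝ satisfy C_j(0) = 0 and C_j(x) ≥ 0 for x ∈ [0, x_{j,max}]. Let a_j ∈ {0, x_{j,max}} and define the feasible set S = { x ∈ ℝ^N : 0 ≤ x_j ≤ a_j for all j, and ∑_{j=1}^N x_j ≤ G }, and the objective f(x) = V e_s (G − ∑_j x_j) − ∑_j H_j x_j + ∑_j J_j C_j(x_j) + ∑_j K_j x_j. Suppose for some index i: K_i > x_{i,max} + V(ω_i μ + e_max) and H_i ≤ V ω_i μ + x_{i,max}. Then every minimizer x̃ of f over S satisfies x̃_i = 0. -/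
open Finset

theorem minimizer_b1_zero_when_K_large
    (N : ℕ) (G V e_max e_s μ : ℝ)
    (hG : 0 < G) (hV : 0 < V) (he_max : 0 ≤ e_max)
    (he_s : 0 ≤ e_s ∧ e_s ≤ e_max) (hμ : 0 < μ)
    (H K J x_max ω a : Fin N → ℝ)
    (hJ : ∀ j, 0 ≤ J j) (hx_max : ∀ j, 0 < x_max j) (hω : ∀ j, 0 < ω j)
    (C : Fin N → ℝ → ℝ)
    (hC0 : ∀ j, C j 0 = 0)
    (hCnn : ∀ j, ∀ x ∈ Set.Icc (0 : ℝ) (x_max j), 0 ≤ C j x)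
    (ha : ∀ j, a j = 0 ∨ a j = x_max j)
    (S : Set (Fin N → ℝ))
    (hS : S = {x : Fin N → ℝ | (∀ j, 0 ≤ x j ∧ x j ≤ a j) ∧ (∑ j, x j) ≤ G})
    (f : (Fin N → ℝ) → ℝ)
    (hf : f = fun x => V * e_s * (G - ∑ j, x j) - (∑ j, H j * x j)
      + (∑ j, J j * C j (x j)) + (∑ j, K j * x j))
    (i : Fin N)
    (hKi : K i > x_max i + V * (ω i * μ + e_max))
    (hHi : H i ≤ V * ω i * μ + x_max i)
    (xt : Fin N → ℝ) (hxt : xt ∈ S) (hmin : ∀ y ∈ S, f xt ≤ f y) :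
    xt i = 0 := by
  rw [hS] at hxt
  obtain ⟨hbnd, hsum⟩ := hxt
  by_contra h
  have hpos : 0 < xt i := lt_of_le_of_ne (hbnd i).1 (Ne.symm h)
  -- a i must be x_max i
  have hai : a i = x_max i := by
    rcases ha i with h0 | h0
    · exfalso; have := (hbnd i).2; rw [h0] at this; linarith
    · exact h0
  set y : Fin N → ℝ := Function.update xt i 0 with hy
  have hyle : ∀ j, y j ≤ xt j := by
    intro j
    rcases eq_or_ne j i with hj | hj
    · rw [hj]; simp [hy, Function.update_self]; exact (hbnd i).1
    · simp [hy, Function.update_of_ne hj]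
  have hyS : y ∈ S := by
    rw [hS]
    refine ⟨fun j => ?_, ?_⟩
    · rcases eq_or_ne j i with hj | hj
      · rw [hj]
        simp [hy, Function.update_self]
        rw [hai]; exact (hx_max i).le
      · simp [hy, Function.update_of_ne hj]; exact hbnd j
    · exact le_trans (Finset.sum_le_sum fun j _ => hyle j) hsum
  have key : ∀ g : Fin N → ℝ → ℝ, ∑ j, g j (y j)
      = (∑ j, g j (xt j)) - g i (xt i) + g i 0 := by
    intro g
    have heq : (fun j => g j (y j)) = Function.update (fun j => g j (xt j)) i (g i 0) := by
      funext j
      by_cases hj : j = i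
      · rw [hj]; simp [hy, Function.update_self]
      · simp [hy, Function.update_of_ne hj]
    have h1 : ∑ j, g j (xt j)
        = g i (xt i) + ∑ j ∈ Finset.univ \ {i}, g j (xt j) := by
      rw [← Finset.erase_eq]
      exact (Finset.add_sum_erase _ _ (Finset.mem_univ i)).symm
    calc ∑ j, g j (y j)
        = ∑ j, Function.update (fun j => g j (xt j)) i (g i 0) j := by rw [heq]
      _ = g i 0 + ∑ j ∈ Finset.univ \ {i}, g j (xt j) :=
          Finset.sum_update_of_mem (Finset.mem_univ i) _ _
      _ = (∑ j, g j (xt j)) - g i (xt i) + g i 0 := by rw [h1]; ring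
  have hsy : ∑ j, y j = (∑ j, xt j) - xt i := by
    have := key (fun _ x => x); simpa using this
  have hH : ∑ j, H j * (y j) = (∑ j, H j * xt j) - H i * xt i := by
    have := key (fun j x => H j * x); simpa using this
  have hK : ∑ j, K j * (y j) = (∑ j, K j * xt j) - K i * xt i := by
    have := key (fun j x => K j * x); simpa using this
  have hJC : ∑ j, J j * C j (y j) = (∑ j, J j * C j (xt j)) - J i * C i (xt i) := by
    have := key (fun j x => J j * C j x)
    simpa [hC0 i] using this
  have hfy : f y = f xt + V * e_s * xt i + H i * xt i - J i * C i (xt i) - K i * xt i := by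
    rw [hf]
    simp only
    rw [hsy, hH, hK, hJC]
    ring
  have hCnni : 0 ≤ J i * C i (xt i) := by
    apply mul_nonneg (hJ i)
    apply hCnn i
    exact ⟨(hbnd i).1, by rw [← hai]; exact (hbnd i).2⟩
  have hVes : V * e_s ≤ V * e_max := mul_le_mul_of_nonneg_left he_s.2 hV.le
  have hfac : V * e_s + H i - K i < 0 := by nlinarith
  have hlt : f y < f xt := by
    have : (V * e_s + H i - K i) * xt i < 0 := mul_neg_of_neg_of_pos hfac hpos
    nlinarith [hCnni]
  exact absurd (hmin y hyS) (not_le.mpr hlt)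
end

section
/- Let N ∈ ℕ, Ĝ > 0, V > 0, e_max ≥ 0, and 0 ≤ e_d ≤ e_max. For each j ∈ {1,…,N} let H_j, K_j ∈ ℝ, J_j ≥ 0, x_{j,max} > 0, ω_j > 0, μ > 0, and let C_j : ℝ → ℝ satisfy C_j(0) = 0 and C_j(x) ≥ 0 for x ∈ [0, x_{j,max}]. Let a_j ∈ {0, x_{j,max}} and define the feasible set S = { x ∈ ℝ^N : 0 ≤ x_j ≤ a_j for all j, and ∑_{j=1}^N x_j ≤ Ĝ }, and the objective g(x) = V e_d (Ĝ − ∑_j x_j) − ∑_j H_j x_j + ∑_j J_j C_j(x_j) − ∑_j K_j x_j. Suppose for some index i: K_i < −x_{i,max} − V(ω_i μ + e_max) and H_i ≤ V ω_i μ + x_{i,max}. Then every minimizer x̃ of g over S satisfies x̃_i = 0. -/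
open Finset

theorem minimizer_b2_zero_when_K_small
    (N : ℕ) (Ghat V e_max e_d μ : ℝ)
    (hG : 0 < Ghat) (hV : 0 < V) (he_max : 0 ≤ e_max)
    (he_d : 0 ≤ e_d ∧ e_d ≤ e_max) (hμ : 0 < μ)
    (H K J x_max ω a : Fin N → ℝ)
    (hJ : ∀ j, 0 ≤ J j) (hx_max : ∀ j, 0 < x_max j) (hω : ∀ j, 0 < ω j)
    (C : Fin N → ℝ → ℝ)
    (hC0 : ∀ j, C j 0 = 0)
    (hCnn : ∀ j, ∀ x ∈ Set.Icc (0 : ℝ) (x_max j), 0 ≤ C j x)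
    (ha : ∀ j, a j = 0 ∨ a j = x_max j)
    (S : Set (Fin N → ℝ))
    (hS : S = {x : Fin N → ℝ | (∀ j, 0 ≤ x j ∧ x j ≤ a j) ∧ (∑ j, x j) ≤ Ghat})
    (g : (Fin N → ℝ) → ℝ)
    (hg : g = fun x => V * e_d * (Ghat - ∑ j, x j) - (∑ j, H j * x j)
      + (∑ j, J j * C j (x j)) - (∑ j, K j * x j))
    (i : Fin N)
    (hKi : K i < -(x_max i) - V * (ω i * μ + e_max))
    (hHi : H i ≤ V * ω i * μ + x_max i)
    (xt : Fin N → ℝ) (hxt : xt ∈ S) (hmin : ∀ y ∈ S, g xt ≤ g y) :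
    xt i = 0 := by
  subst hS hg
  obtain ⟨hbd, hsum⟩ := hxt
  obtain ⟨ht0, hta⟩ := hbd i
  set t := xt i with htdef
  rcases ha i with h0 | hmax
  · linarith [h0 ▸ hta]
  -- y : replace coordinate i by 0
  set y : Fin N → ℝ := Function.update xt i 0 with hy
  have hyi : y i = 0 := Function.update_self i 0 xt
  have hyj : ∀ j, j ≠ i → y j = xt j := fun j hj => Function.update_of_ne hj 0 xt
  have key : ∀ f : Fin N → ℝ, ∑ j, f j * y j = ∑ j, f j * xt j - f i * xt i := by
    intro f
    have h1 : ∑ j, f j * y j = ∑ j ∈ univ.erase i, f j * y j + f i * y i :=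
      (Finset.sum_erase_add _ _ (mem_univ i)).symm
    have h2 : ∑ j, f j * xt j = ∑ j ∈ univ.erase i, f j * xt j + f i * xt i :=
      (Finset.sum_erase_add _ _ (mem_univ i)).symm
    have h3 : ∑ j ∈ univ.erase i, f j * y j = ∑ j ∈ univ.erase i, f j * xt j := by
      apply Finset.sum_congr rfl
      intro j hj
      rw [hyj j (Finset.ne_of_mem_erase hj)]
    rw [h1, h2, h3, hyi]; ring
  have keyC : ∑ j, J j * C j (y j) = ∑ j, J j * C j (xt j) - J i * C i (xt i) := by
    have h1 : ∑ j, J j * C j (y j) = ∑ j ∈ univ.erase i, J j * C j (y j) + J i * C i (y i) :=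
      (Finset.sum_erase_add _ _ (mem_univ i)).symm
    have h2 : ∑ j, J j * C j (xt j) =
        ∑ j ∈ univ.erase i, J j * C j (xt j) + J i * C i (xt i) :=
      (Finset.sum_erase_add _ _ (mem_univ i)).symm
    have h3 : ∑ j ∈ univ.erase i, J j * C j (y j)
        = ∑ j ∈ univ.erase i, J j * C j (xt j) := by
      apply Finset.sum_congr rfl
      intro j hj
      rw [hyj j (Finset.ne_of_mem_erase hj)]
    rw [h1, h2, h3, hyi, hC0 i]; ring
  have keysum : ∑ j, y j = ∑ j, xt j - xt i := by
    have := key (fun _ => (1 : ℝ))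
    simpa using this
  have hyS : y ∈ {x : Fin N → ℝ | (∀ j, 0 ≤ x j ∧ x j ≤ a j) ∧ (∑ j, x j) ≤ Ghat} := by
    constructor
    · intro j
      by_cases hj : j = i
      · rw [hj, hyi]
        exact ⟨le_refl 0, by rw [hmax]; exact (hx_max i).le⟩
      · rw [hyj j hj]; exact hbd j
    · rw [keysum]; linarith
  have hle := hmin y hyS
  simp only [key, keyC, keysum] at hle
  have hCnn' : 0 ≤ C i (xt i) := hCnn i (xt i) ⟨ht0, hmax ▸ hta⟩
  have hJC : 0 ≤ J i * C i (xt i) := mul_nonneg (hJ i) hCnn'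
  have hVe : V * e_d ≤ V * e_max := mul_le_mul_of_nonneg_left he_d.2 hV.le
  -- coefficient is negative
  have hcoef : V * e_d + H i + K i < 0 := by nlinarith
  nlinarith [mul_nonneg ht0 (neg_nonneg.mpr hcoef.le)]
end

section
/- Let x_max > 0, s_min < s_max, ω > 0, μ > 0, e_max ≥ 0 be real numbers with s_max − s_min > 4 x_max, and let 0 < V ≤ (s_max − s_min − 4 x_max) / (2(ω μ + e_max)). Define c = s_min + 2 x_max + V(ω μ + e_max) and θ = x_max + V(ω μ + e_max). Let K : ℕ → ℝ and b : ℕ → ℝ, and let R ⊆ ℕ with 0 ∈ R, such that: (i) K_t ∈ [s_min − c, s_max − c] for every t ∈ R; (ii) K_{t+1} = K_t + b_t whenever t + 1 ∉ R; (iii) |b_t| ≤ x_max for all t; (iv) b_t ≤ 0 whenever K_t > θ; and (v) b_t ≥ 0 whenever K_t < −θ. Then K_t ∈ [s_min − c, s_max − c] for all t ∈ ℕ. -/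
theorem K_queue_bounded
    (x_max s_min s_max ω μ e_max V : ℝ)
    (hx_max : 0 < x_max) (hs : s_min < s_max) (hω : 0 < ω) (hμ : 0 < μ)
    (he_max : 0 ≤ e_max)
    (hspan : s_max - s_min > 4 * x_max)
    (hV : 0 < V ∧ V ≤ (s_max - s_min - 4 * x_max) / (2 * (ω * μ + e_max)))
    (c θ : ℝ)
    (hc : c = s_min + 2 * x_max + V * (ω * μ + e_max))
    (hθ : θ = x_max + V * (ω * μ + e_max))
    (K b : ℕ → ℝ) (R : Set ℕ) (hR0 : 0 ∈ R)
    (hKR : ∀ t ∈ R, K t ∈ Set.Icc (s_min - c) (s_max - c))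
    (hrec : ∀ t, (t + 1) ∉ R → K (t + 1) = K t + b t)
    (hb : ∀ t, |b t| ≤ x_max)
    (hup : ∀ t, K t > θ → b t ≤ 0)
    (hdown : ∀ t, K t < -θ → b t ≥ 0) :
    ∀ t, K t ∈ Set.Icc (s_min - c) (s_max - c) := by
  obtain ⟨hV0, hVle⟩ := hV
  have hpos : 0 < ω * μ + e_max := by positivity
  have hVprod : V * (ω * μ + e_max) ≤ (s_max - s_min - 4 * x_max) / 2 := by
    rw [le_div_iff₀ (by positivity : (0:ℝ) < 2 * (ω * μ + e_max))] at hVle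
    nlinarith
  have hVprod0 : 0 ≤ V * (ω * μ + e_max) := by positivity
  have hθ0 : 0 < θ := by rw [hθ]; linarith
  have hlow : s_min - c = -θ - x_max := by rw [hc, hθ]; ring
  have hhigh : θ + x_max ≤ s_max - c := by rw [hc, hθ]; linarith
  intro t
  induction t with
  | zero => exact hKR 0 hR0
  | succ n ih =>
    by_cases hmem : (n + 1) ∈ R
    · exact hKR _ hmem
    · have hrec' := hrec n hmem
      have hbn := abs_le.mp (hb n)
      constructor
      · rcases lt_or_ge (K n) (-θ) with h | h
        · have := hdown n h
          have := ih.1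
          rw [hrec']; linarith
        · rw [hrec', hlow]; linarith [hbn.1]
      · rcases lt_or_ge θ (K n) with h | h
        · have := hup n h
          have := ih.2
          rw [hrec']; linarith
        · rw [hrec']; linarith [hbn.2]
end

section
/- Let x_max > 0, s_min < s_max, ω > 0, μ > 0, e_max ≥ 0 be real numbers with s_max − s_min > 4 x_max, and let 0 < V ≤ (s_max − s_min − 4 x_max) / (2(ω μ + e_max)). Define c = s_min + 2 x_max + V(ω μ + e_max) and θ = x_max + V(ω μ + e_max). Let s : ℕ → ℝ and b : ℕ → ℝ, and let R ⊆ ℕ with 0 ∈ R, such that: (i) s_t ∈ [s_min, s_max] for every t ∈ R; (ii) s_{t+1} = s_t + b_t whenever t + 1 ∉ R; (iii) |b_t| ≤ x_max for all t; (iv) b_t ≤ 0 whenever s_t − c > θ; and (v) b_t ≥ 0 whenever s_t − c < −θ. Then s_t ∈ [s_min, s_max] for all t ∈ ℕ. -/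
theorem energy_state_bounded
    (x_max s_min s_max ω μ e_max V : ℝ)
    (hx_max : 0 < x_max) (hs : s_min < s_max) (hω : 0 < ω) (hμ : 0 < μ)
    (he_max : 0 ≤ e_max)
    (hspan : s_max - s_min > 4 * x_max)
    (hV : 0 < V ∧ V ≤ (s_max - s_min - 4 * x_max) / (2 * (ω * μ + e_max)))
    (c θ : ℝ)
    (hc : c = s_min + 2 * x_max + V * (ω * μ + e_max))
    (hθ : θ = x_max + V * (ω * μ + e_max))
    (s b : ℕ → ℝ) (R : Set ℕ) (hR0 : 0 ∈ R)
    (hsR : ∀ t ∈ R, s t ∈ Set.Icc s_min s_max)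
    (hrec : ∀ t, (t + 1) ∉ R → s (t + 1) = s t + b t)
    (hb : ∀ t, |b t| ≤ x_max)
    (hup : ∀ t, s t - c > θ → b t ≤ 0)
    (hdown : ∀ t, s t - c < -θ → b t ≥ 0) :
    ∀ t, s t ∈ Set.Icc s_min s_max := by
  have hden : 0 < ω * μ + e_max := by positivity
  have hA : 0 ≤ V * (ω * μ + e_max) := mul_nonneg hV.1.le hden.le
  have hA2 : 2 * (V * (ω * μ + e_max)) ≤ s_max - s_min - 4 * x_max := by
    have h := (le_div_iff₀ (by positivity : (0:ℝ) < 2 * (ω * μ + e_max))).mp hV.2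
    nlinarith
  intro t
  induction t with
  | zero => exact hsR 0 hR0
  | succ n ih =>
    by_cases hmem : (n + 1) ∈ R
    · exact hsR _ hmem
    · have hrec' := hrec n hmem
      have hbn := abs_le.mp (hb n)
      obtain ⟨hl, hr⟩ := ih
      constructor
      · by_cases hlow : s n - c < -θ
        · have hb0 := hdown n hlow
          rw [hrec']; linarith
        · push_neg at hlow
          rw [hrec', hc, hθ] at *
          nlinarith
      · by_cases hhigh : s n - c > θ
        · have hb0 := hup n hhigh
          rw [hrec']; linarith
        · push_neg at hhigh
          rw [hrec', hc, hθ] at *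
          nlinarith
end

section
/- Let N ∈ ℕ, and for i ∈ {1,…,N} let ω_i ≥ 0 and M_i > 0. Let M = max_i M_i, and let U : ℝ → ℝ be concave and continuous on [0, M]. Let V > 0, B ∈ ℝ, f* ∈ ℝ. Suppose sequences z_{i,·} : ℕ → ℝ with z_{i,t} ∈ [0, M_i], e : ℕ → ℝ, and L : ℕ → ℝ with L_t ≥ 0 satisfy, for all t ∈ ℕ: L_{t+1} − L_t − V ( ∑_{i=1}^N ω_i U(z_{i,t}) − e_t ) ≤ B − V f*. Suppose moreover that for each i the Cesàro averages (1/T) ∑_{t=0}^{T−1} z_{i,t} converge to z̄_i and that (1/T) ∑_{t=0}^{T−1} e_t converges to ē. Then ∑_{i=1}^N ω_i U(z̄_i) − ē ≥ f* − B/V. -/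
/-!
Summing the drift inequality over the first `T` slots telescopes the Lyapunov terms, and `L T ≥ 0`
leaves `f* - B/V - L 0 / (V T)` below the time-averaged welfare. Jensen's inequality for the concave
`U` moves the averages inside `U`, and continuity of `U` on `[0, M]` lets `T → ∞`.
-/

open Filter Finset Topology

noncomputable def cesaroMean (f : ℕ → ℝ) (T : ℕ) : ℝ := 1 / (T : ℝ) * ∑ t ∈ range T, f t

lemma cesaroMean_eq_sum_smul (f : ℕ → ℝ) (T : ℕ) :
    cesaroMean f T = ∑ t ∈ range T, (1 / (T : ℝ)) • f t := by
  simp only [cesaroMean, smul_eq_mul, mul_sum]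

lemma sum_range_const_one_div {T : ℕ} (hT : 0 < T) : ∑ _t ∈ range T, 1 / (T : ℝ) = 1 := by
  simp only [sum_const, card_range, nsmul_eq_mul]
  field_simp

lemma Convex.cesaroMean_mem {s : Set ℝ} (hs : Convex ℝ s) {f : ℕ → ℝ} (hf : ∀ t, f t ∈ s)
    {T : ℕ} (hT : 0 < T) : cesaroMean f T ∈ s := by
  rw [cesaroMean_eq_sum_smul]
  exact hs.sum_mem (fun _ _ => by positivity) (sum_range_const_one_div hT) (fun t _ => hf t)

lemma ConcaveOn.cesaroMean_comp_le {s : Set ℝ} {U : ℝ → ℝ} (hU : ConcaveOn ℝ s U) {f : ℕ → ℝ}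
    (hf : ∀ t, f t ∈ s) {T : ℕ} (hT : 0 < T) :
    cesaroMean (fun t => U (f t)) T ≤ U (cesaroMean f T) := by
  rw [cesaroMean_eq_sum_smul, cesaroMean_eq_sum_smul]
  exact hU.le_map_sum (fun _ _ => by positivity) (sum_range_const_one_div hT) (fun t _ => hf t)

lemma cesaroMean_weighted_sum_sub {ι : Type*} [Fintype ι] (ω : ι → ℝ) (g : ι → ℕ → ℝ)
    (e : ℕ → ℝ) (T : ℕ) :
    cesaroMean (fun t => (∑ i, ω i * g i t) - e t) T
      = (∑ i, ω i * cesaroMean (g i) T) - cesaroMean e T := by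
  simp only [cesaroMean, sum_sub_distrib, mul_sub, mul_sum]
  rw [sum_comm]
  congr 1
  refine sum_congr rfl fun i _ => sum_congr rfl fun t _ => ?_
  ring

lemma sum_range_le_of_drift {L w : ℕ → ℝ} {V c : ℝ}
    (hdrift : ∀ t, L (t + 1) - L t - V * w t ≤ c) (T : ℕ) :
    L T - L 0 - V * ∑ t ∈ range T, w t ≤ T * c := by
  calc L T - L 0 - V * ∑ t ∈ range T, w t
      = ∑ t ∈ range T, (L (t + 1) - L t - V * w t) := by
        rw [sum_sub_distrib, sum_range_sub, mul_sum]
    _ ≤ ∑ _t ∈ range T, c := sum_le_sum fun t _ => hdrift t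
    _ = T * c := by rw [sum_const, card_range, nsmul_eq_mul]

lemma cesaroMean_ge_of_drift {L w : ℕ → ℝ} {V B fstar : ℝ} (hV : 0 < V) (hL : ∀ t, 0 ≤ L t)
    (hdrift : ∀ t, L (t + 1) - L t - V * w t ≤ B - V * fstar) {T : ℕ} (hT : 0 < T) :
    fstar - B / V - L 0 / (V * T) ≤ cesaroMean w T := by
  have hT' : (0 : ℝ) < T := by exact_mod_cast hT
  have hlhs : fstar - B / V - L 0 / (V * T) = (T * V * fstar - T * B - L 0) / (V * T) := by
    field_simp
  have hrhs : cesaroMean w T = V * (∑ t ∈ range T, w t) / (V * T) := by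
    rw [cesaroMean]
    field_simp
  rw [hlhs, hrhs]
  gcongr
  linarith [sum_range_le_of_drift hdrift T, hL T]

lemma ContinuousOn.tendsto_comp_of_eventually_mem {α β γ : Type*} [TopologicalSpace α]
    [TopologicalSpace β] {l : Filter γ} [l.NeBot] {s : Set α} (hs : IsClosed s) {U : α → β}
    (hU : ContinuousOn U s) {x : γ → α} {a : α} (hx : Tendsto x l (𝓝 a))
    (hmem : ∀ᶠ n in l, x n ∈ s) : Tendsto (fun n => U (x n)) l (𝓝 (U a)) :=
  (hU a (hs.mem_of_tendsto hx hmem)).tendsto.comp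
    (tendsto_nhdsWithin_iff.2 ⟨hx, hmem⟩)

lemma tendsto_sub_div_mul_natCast (a b : ℝ) {V : ℝ} (hV : 0 < V) :
    Tendsto (fun T : ℕ => a - b / (V * T)) atTop (𝓝 a) := by
  simpa using (tendsto_const_nhds (x := a)).sub
    ((tendsto_const_nhds (x := b)).div_atTop (tendsto_natCast_atTop_atTop.const_mul_atTop hV))

theorem welfare_within_B_over_V_of_optimum_general
    (N : ℕ) (ω M : Fin N → ℝ)
    (hω : ∀ i, 0 ≤ ω i)
    (Mmax : ℝ) (hMmax : IsGreatest (Set.range M) Mmax)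
    (U : ℝ → ℝ)
    (hconc : ConcaveOn ℝ (Set.Icc 0 Mmax) U)
    (hcont : ContinuousOn U (Set.Icc 0 Mmax))
    (V B fstar : ℝ) (hV : 0 < V)
    (z : Fin N → ℕ → ℝ) (hz : ∀ i t, z i t ∈ Set.Icc (0 : ℝ) (M i))
    (e L : ℕ → ℝ) (hL : ∀ t, 0 ≤ L t)
    (hdrift : ∀ t, L (t + 1) - L t - V * ((∑ i, ω i * U (z i t)) - e t)
      ≤ B - V * fstar)
    (zbar : Fin N → ℝ)
    (hzbar : ∀ i, Tendsto (fun T : ℕ => (1 / (T : ℝ)) * ∑ t ∈ Finset.range T, z i t)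
      atTop (nhds (zbar i)))
    (ebar : ℝ)
    (hebar : Tendsto (fun T : ℕ => (1 / (T : ℝ)) * ∑ t ∈ Finset.range T, e t)
      atTop (nhds ebar)) :
    (∑ i, ω i * U (zbar i)) - ebar ≥ fstar - B / V := by
  have hzIcc : ∀ i t, z i t ∈ Set.Icc 0 Mmax := fun i t =>
    ⟨(hz i t).1, (hz i t).2.trans (hMmax.2 ⟨i, rfl⟩)⟩
  have hbound : ∀ T, 0 < T → fstar - B / V - L 0 / (V * T)
      ≤ (∑ i, ω i * U (cesaroMean (z i) T)) - cesaroMean e T := fun T hT =>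
    calc fstar - B / V - L 0 / (V * T)
        ≤ cesaroMean (fun t => (∑ i, ω i * U (z i t)) - e t) T :=
          cesaroMean_ge_of_drift hV hL hdrift hT
      _ = (∑ i, ω i * cesaroMean (fun t => U (z i t)) T) - cesaroMean e T :=
          cesaroMean_weighted_sum_sub ω (fun i t => U (z i t)) e T
      _ ≤ (∑ i, ω i * U (cesaroMean (z i) T)) - cesaroMean e T := by
          gcongr with i
          exacts [hω i, hconc.cesaroMean_comp_le (hzIcc i) hT]
  have hwelfare : Tendsto (fun T => (∑ i, ω i * U (cesaroMean (z i) T)) - cesaroMean e T)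
      atTop (𝓝 ((∑ i, ω i * U (zbar i)) - ebar)) :=
    (tendsto_finsetSum _ fun i _ => tendsto_const_nhds.mul
      (hcont.tendsto_comp_of_eventually_mem isClosed_Icc (hzbar i)
        ((eventually_gt_atTop 0).mono fun T hT => (convex_Icc 0 Mmax).cesaroMean_mem
          (hzIcc i) hT))).sub hebar
  exact le_of_tendsto_of_tendsto (tendsto_sub_div_mul_natCast _ (L 0) hV) hwelfare
    ((eventually_gt_atTop 0).mono hbound)

theorem welfare_within_B_over_V_of_optimum
    (N : ℕ) (ω M : Fin N → ℝ)
    (hω : ∀ i, 0 ≤ ω i) (hM : ∀ i, 0 < M i)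
    (Mmax : ℝ) (hMmax : IsGreatest (Set.range M) Mmax)
    (U : ℝ → ℝ)
    (hconc : ConcaveOn ℝ (Set.Icc 0 Mmax) U)
    (hcont : ContinuousOn U (Set.Icc 0 Mmax))
    (V B fstar : ℝ) (hV : 0 < V)
    (z : Fin N → ℕ → ℝ) (hz : ∀ i t, z i t ∈ Set.Icc (0 : ℝ) (M i))
    (e L : ℕ → ℝ) (hL : ∀ t, 0 ≤ L t)
    (hdrift : ∀ t, L (t + 1) - L t - V * ((∑ i, ω i * U (z i t)) - e t)
      ≤ B - V * fstar)
    (zbar : Fin N → ℝ)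
    (hzbar : ∀ i, Tendsto (fun T : ℕ => (1 / (T : ℝ)) * ∑ t ∈ Finset.range T, z i t)
      atTop (nhds (zbar i)))
    (ebar : ℝ)
    (hebar : Tendsto (fun T : ℕ => (1 / (T : ℝ)) * ∑ t ∈ Finset.range T, e t)
      atTop (nhds ebar)) :
    (∑ i, ω i * U (zbar i)) - ebar ≥ fstar - B / V :=
  welfare_within_B_over_V_of_optimum_general N ω M hω Mmax hMmax U hconc hcont V B fstar hV z hz e L
    hL hdrift zbar hzbar ebar hebar
end
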